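/- Let f : X → Y be a map between cellular multipointed d-spaces. Then f is a globular subdivision (i.e. induces a homeomorphism |X| ≅ |Y| of underlying spaces) if and only if the induced map of directed spaces Sp(f) : Sp(X) → Sp(Y) is an isomorphism. -/

import Mathlib

/- STATEMENT 18: Let f : X → Y be a map between cellular multipointed d-spaces. Then f
is a globular subdivision (i.e. induces a homeomorphism |X| ≅ |Y|) iff the induced map
Sp(f) : Sp(X) → Sp(Y) is an isomorphism of directed spaces. -/

open Set unitInterval

noncomputable section

variable {α : Type*} {β : Type*} [TopologicalSpace α] [TopologicalSpace β]

/-- Clamp a real number into the unit interval. -/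
def toI (t : ℝ) : I := Set.projIcc 0 1 zero_le_one t

/-- Normalized composition of two paths parametrized by [0,1]. -/
def normComp (γ₁ γ₂ : I → α) : I → α :=
  fun t => if (t : ℝ) ≤ 1 / 2 then γ₁ (toI (2 * (t : ℝ))) else γ₂ (toI (2 * (t : ℝ) - 1))

/-- An element of `M(1,1)`: a non-decreasing (continuous) surjection of [0,1]. -/
def IsReparam (φ : I → I) : Prop := Monotone φ ∧ Function.Surjective φ ∧ Continuous φ

/-- An element of `𝓘(1)`: a non-decreasing continuous map [0,1] → [0,1],
not necessarily surjective. -/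
def IsNondecreasing (φ : I → I) : Prop := Monotone φ ∧ Continuous φ

/-- A multipointed d-space: a space, a set of states, and a set of execution paths with
endpoints in the states, closed under non-decreasing surjective reparametrization and
under normalized composition. -/
structure MultipointedDSpace (α : Type*) [TopologicalSpace α] where
  states : Set α
  exec : Set (I → α)
  exec_cont : ∀ γ ∈ exec, Continuous γ
  exec_src : ∀ γ ∈ exec, γ 0 ∈ states
  exec_tgt : ∀ γ ∈ exec, γ 1 ∈ states
  exec_reparam : ∀ γ ∈ exec, ∀ φ : I → I, IsReparam φ → γ ∘ φ ∈ exec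
  exec_norm : ∀ γ₁ ∈ exec, ∀ γ₂ ∈ exec, γ₁ 1 = γ₂ 0 → normComp γ₁ γ₂ ∈ exec

/-- Moore composition of a path of length `ℓ₁` with a second path. -/
def mooreComp (ℓ₁ : ℝ) (f g : ℝ → α) : ℝ → α := fun t => if t ≤ ℓ₁ then f t else g (t - ℓ₁)

/-- `(n+1)`-fold Moore composition with prescribed lengths. -/
def mooreCompN : (n : ℕ) → (Fin (n + 1) → ℝ) → (Fin (n + 1) → ℝ → α) → ℝ → α
  | 0, _, f => f 0
  | n + 1, ℓ, f =>
      mooreComp (ℓ 0) (f 0) (mooreCompN n (fun i => ℓ i.succ) (fun i => f i.succ))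

/-- `d(X)`: the set of all constant paths together with all Moore compositions
`(γ₁∘φ₁∘μ_{ℓ₁}) * ⋯ * (γₙ∘φₙ∘μ_{ℓₙ})` with `Σ ℓᵢ = 1`, where the `γᵢ` are execution
paths and the `φᵢ` are non-decreasing continuous self-maps of [0,1]
(`μ_ℓ(t) = t/ℓ`). -/
def dPaths (X : MultipointedDSpace α) : Set (I → α) :=
  {Γ | (∃ x, ∀ t, Γ t = x) ∨
    ∃ (n : ℕ) (ℓ : Fin (n + 1) → ℝ) (γ : Fin (n + 1) → I → α) (φ : Fin (n + 1) → I → I),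
      (∀ i, 0 < ℓ i) ∧ (∑ i, ℓ i = 1) ∧ (∀ i, γ i ∈ X.exec) ∧
      (∀ i, IsNondecreasing (φ i)) ∧
      ∀ t : I, Γ t = mooreCompN n ℓ (fun i s => γ i (φ i (toI (s / ℓ i)))) (t : ℝ)}

/-- A globular cell of a multipointed d-space `X`, of dimension `n + 1`: the data of an
attaching map `Glob^top(D^n) → X` (written as `g : D^n × [0,1] → α`, constant on
`D^n × {0}` and on `D^n × {1}`), injective on the open part, whose longitudinal paths
are execution paths of `X`. -/
structure GlobularCell (X : MultipointedDSpace α) where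
  n : ℕ
  g : EuclideanSpace ℝ (Fin n) → I → α
  src : α
  tgt : α
  src_mem : src ∈ X.states
  tgt_mem : tgt ∈ X.states
  g_src : ∀ z : EuclideanSpace ℝ (Fin n), ‖z‖ ≤ 1 → g z 0 = src
  g_tgt : ∀ z : EuclideanSpace ℝ (Fin n), ‖z‖ ≤ 1 → g z 1 = tgt
  g_cont : ContinuousOn (fun p : EuclideanSpace ℝ (Fin n) × I => g p.1 p.2)
    ((Metric.closedBall 0 1) ×ˢ univ)
  exec_mem : ∀ z : EuclideanSpace ℝ (Fin n), ‖z‖ ≤ 1 → (fun t => g z t) ∈ X.exec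
  g_inj : ∀ (z z' : EuclideanSpace ℝ (Fin n)) (t t' : I), ‖z‖ < 1 → ‖z'‖ < 1 →
    0 < (t : ℝ) → (t : ℝ) < 1 → 0 < (t' : ℝ) → (t' : ℝ) < 1 →
    g z t = g z' t' → z = z' ∧ t = t'

/-- The (open) globular cell: the image of `|Glob(D^n)| ∖ |Glob(S^{n-1})|`. -/
def GlobularCell.openCell {X : MultipointedDSpace α} (c : GlobularCell X) : Set α :=
  {x | ∃ (z : EuclideanSpace ℝ (Fin c.n)) (t : I),
    ‖z‖ < 1 ∧ 0 < (t : ℝ) ∧ (t : ℝ) < 1 ∧ c.g z t = x}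

/-- A cellular multipointed d-space: a multipointed d-space obtained by (transfinitely)
attaching globular cells to its set of states. The underlying space is Hausdorff, it is
partitioned into the states and the open globular cells, and every execution path
decomposes (uniquely) as its globular naturalization — a Moore composition of
longitudinal cell paths, each of length 1 — precomposed with a non-decreasing
continuous surjection [0,1] → [0,n+1]. -/
structure CellularMDSpace (α : Type*) [TopologicalSpace α]
    extends MultipointedDSpace α where
  t2 : T2Space α
  ι : Type*
  cell : ι → GlobularCell toMultipointedDSpace
  cell_disjoint : Pairwise fun i j => Disjoint (cell i).openCell (cell j).openCell
  cell_states_disjoint : ∀ i, Disjoint (cell i).openCell states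
  cell_cover : states ∪ ⋃ i, (cell i).openCell = univ
  exec_decomp : ∀ γ ∈ exec, ∃ (n : ℕ) (c : Fin (n + 1) → ι)
      (z : ∀ i : Fin (n + 1), EuclideanSpace ℝ (Fin (cell (c i)).n)) (φ : I → ℝ),
      (∀ i, ‖z i‖ < 1) ∧ Monotone φ ∧ Continuous φ ∧
      φ 0 = 0 ∧ φ 1 = (n + 1 : ℝ) ∧
      ∀ t : I, γ t = mooreCompN n (fun _ => 1)
        (fun i s => (cell (c i)).g (z i) (toI s)) (φ t)

/-- A morphism of multipointed d-spaces. -/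
def IsMDMap (X : MultipointedDSpace α) (Y : MultipointedDSpace β) (f : α → β) : Prop :=
  Continuous f ∧ MapsTo f X.states Y.states ∧ ∀ γ ∈ X.exec, f ∘ γ ∈ Y.exec

/-! The inverse `g` of a globular subdivision `f` is continuous, so everything reduces to showing
that `g` carries an execution path `γ` of `Y` to a non-decreasing reparametrization of an
execution path of `X`. Write `γ` as a reparametrized Moore composition of longitudinal paths of
open cells of `Y`. Since `f` is injective and each longitudinal path of an open cell of `X` is sent
by `f` to a strictly monotone reparametrization of such a Moore composition, the `g`-image of a
longitudinal path of `Y` runs monotonically along one longitudinal path of `X`. Two consecutive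
pieces either run along the same longitudinal path of `X`, or the first ends where its cell path
ends and the second starts where its cell path starts; in the second case they are glued by a
normalized composition. -/

section MooreComposition

variable {E E' : Type*}

theorem toI_zero : toI 0 = 0 := Subtype.ext (by simp [toI])

theorem toI_one : toI 1 = 1 := Subtype.ext (by simp [toI])

theorem coe_toI_of_mem {x : ℝ} (hx : x ∈ Icc (0 : ℝ) 1) : (toI x : ℝ) = x := by
  rw [toI, projIcc_of_mem zero_le_one hx]

theorem monotone_toI : Monotone toI := monotone_projIcc zero_le_one

theorem continuous_toI : Continuous toI := continuous_projIcc (h := zero_le_one)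

theorem apply_mooreComp (h : E → E') (ℓ : ℝ) (P Q : ℝ → E) (t : ℝ) :
    h (mooreComp ℓ P Q t) = mooreComp ℓ (h ∘ P) (h ∘ Q) t := by
  unfold mooreComp
  split_ifs <;> rfl

theorem apply_mooreCompN (h : E → E') :
    ∀ (n : ℕ) (ℓ : Fin (n + 1) → ℝ) (F : Fin (n + 1) → ℝ → E) (t : ℝ),
      h (mooreCompN n ℓ F t) = mooreCompN n ℓ (fun i s => h (F i s)) t
  | 0, _, _, _ => rfl
  | n + 1, ℓ, F, t => by
    rw [mooreCompN, apply_mooreComp h, mooreCompN]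
    congr 1
    funext s
    exact apply_mooreCompN h n _ _ s

theorem mooreCompN_one_eq_of_mem_Ioc :
    ∀ {n : ℕ} (F : Fin (n + 1) → ℝ → E) (j : Fin (n + 1)) {u : ℝ},
      u ∈ Ioc (j : ℝ) (j + 1) → mooreCompN n (fun _ => 1) F u = F j (u - j)
  | 0, F, j, u, _ => by
    rw [Fin.fin_one_eq_zero j]
    simp [mooreCompN]
  | n + 1, F, j, u, hu => by
    cases j using Fin.cases with
    | zero =>
      simp only [Fin.val_zero, Nat.cast_zero, zero_add, sub_zero] at hu ⊢
      simp [mooreCompN, mooreComp, hu.2]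
    | succ j =>
      have hj : ((j.succ : Fin (n + 2)) : ℝ) = j + 1 := by simp [Fin.val_succ]
      rw [hj] at hu ⊢
      have hu1 : ¬ u ≤ 1 := by
        have : (0 : ℝ) ≤ j := j.val.cast_nonneg
        linarith [hu.1]
      simp only [mooreCompN, mooreComp, if_neg hu1]
      rw [mooreCompN_one_eq_of_mem_Ioc _ j ⟨by linarith [hu.1], by linarith [hu.2]⟩]
      ring_nf

theorem mooreCompN_one_eq_of_add {n : ℕ} (F : Fin (n + 1) → I → E) (j : Fin (n + 1)) {s : I}
    (hs : 0 < (s : ℝ)) : mooreCompN n (fun _ => 1) (fun i u => F i (toI u)) (j + s) = F j s := by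
  rw [mooreCompN_one_eq_of_mem_Ioc _ j ⟨by linarith, by linarith [s.2.2]⟩, add_sub_cancel_left,
    toI, projIcc_val]

theorem exists_fin_mem_Ioc {k : ℕ} {u : ℝ} (hu : u ∈ Ioo (0 : ℝ) (k + 1)) :
    ∃ j : Fin (k + 1), u ∈ Ioc (j : ℝ) (j + 1) := by
  have h1 : 1 ≤ ⌈u⌉₊ := Nat.one_le_ceil_iff.mpr hu.1
  have hk : ⌈u⌉₊ ≤ k + 1 := Nat.ceil_le.mpr (by push_cast; exact hu.2.le)
  refine ⟨⟨⌈u⌉₊ - 1, by omega⟩, ?_, ?_⟩ <;>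
    simp only [Nat.cast_sub h1, Nat.cast_one]
  · linarith [Nat.ceil_lt_add_one hu.1.le]
  · linarith [Nat.le_ceil u]

theorem Monotone.mooreComp [Preorder E] {P Q : ℝ → E} {ℓ : ℝ}
    (hP : Monotone P) (hQ : Monotone Q) (h : P ℓ = Q 0) : Monotone (mooreComp ℓ P Q) := by
  intro u v huv
  unfold _root_.mooreComp
  split_ifs with hu hv hv
  · exact hP huv
  · calc P u ≤ P ℓ := hP hu
      _ = Q 0 := h
      _ ≤ Q (v - ℓ) := hQ (by linarith)
  · exact absurd (huv.trans hv) hu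
  · exact hQ (by linarith)

theorem Continuous.mooreComp [TopologicalSpace E] {P Q : ℝ → E} {ℓ : ℝ}
    (hP : Continuous P) (hQ : Continuous Q) (h : P ℓ = Q 0) : Continuous (mooreComp ℓ P Q) :=
  Continuous.if_le hP (hQ.comp (continuous_id.sub continuous_const)) continuous_id
    continuous_const (by rintro u rfl; simpa using h)

end MooreComposition

section FactorsVia

variable {E τ τ' : Type*} [Preorder τ] [TopologicalSpace τ] [Preorder τ'] [TopologicalSpace τ']

def FactorsVia (γ : I → E) (Ψ : τ → I) (δ : τ → E) (S : Set τ) : Prop :=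
  Monotone Ψ ∧ Continuous Ψ ∧ EqOn (γ ∘ Ψ) δ S

variable {γ γ₀ : I → E} {Ψ : τ → I} {δ : τ → E} {S : Set τ}

theorem FactorsVia.trans {ρ : I → I} (hρ : FactorsVia γ ρ γ₀ univ) (hΨ : FactorsVia γ₀ Ψ δ S) :
    FactorsVia γ (ρ ∘ Ψ) δ S :=
  ⟨hρ.1.comp hΨ.1, hρ.2.1.comp hΨ.2.1, fun _ hu => (hρ.2.2 (mem_univ _)).trans (hΨ.2.2 hu)⟩

theorem FactorsVia.comp_right (h : FactorsVia γ Ψ δ S) {κ : τ' → τ} (hκ : Monotone κ)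
    (hκc : Continuous κ) {T : Set τ'} (hTS : MapsTo κ T S) :
    FactorsVia γ (Ψ ∘ κ) (δ ∘ κ) T :=
  ⟨h.1.comp hκ, h.2.1.comp hκc, fun _ hu => h.2.2 (hTS hu)⟩

theorem FactorsVia.mooreComp {P : ℝ → I} {η : ℝ → E} {Q : ℝ → I} {δ : ℝ → E} {ℓ K : ℝ}
    (hP : FactorsVia γ P η (Iic ℓ)) (hQ : FactorsVia γ Q δ (Iic K)) (h : P ℓ = Q 0) :
    FactorsVia γ (mooreComp ℓ P Q) (mooreComp ℓ η δ) (Iic (ℓ + K)) := by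
  refine ⟨hP.1.mooreComp hQ.1 h, hP.2.1.mooreComp hQ.2.1 h, fun u (hu : u ≤ ℓ + K) => ?_⟩
  simp only [Function.comp_apply, _root_.mooreComp]
  split_ifs with huℓ
  · exact hP.2.2 huℓ
  · exact hQ.2.2 (show u - ℓ ≤ K by linarith)

end FactorsVia

section NormComp

def firstHalf (p : I) : I := ⟨p / 2, by constructor <;> linarith [p.2.1, p.2.2]⟩

def secondHalf (p : I) : I := ⟨(1 + p) / 2, by constructor <;> linarith [p.2.1, p.2.2]⟩

theorem coe_firstHalf (p : I) : (firstHalf p : ℝ) = p / 2 := rfl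

theorem coe_secondHalf (p : I) : (secondHalf p : ℝ) = (1 + p) / 2 := rfl

variable {E : Type*}

theorem factorsVia_normComp_firstHalf (γ₁ γ₂ : I → E) :
    FactorsVia (normComp γ₁ γ₂) firstHalf γ₁ univ := by
  refine ⟨fun p q hpq => ?_, ?_, fun p _ => ?_⟩
  · change (p : ℝ) / 2 ≤ (q : ℝ) / 2
    linarith [Subtype.coe_le_coe.mpr hpq]
  · exact (continuous_subtype_val.div_const 2).subtype_mk _
  · have hp : (firstHalf p : ℝ) ≤ 1 / 2 := by rw [coe_firstHalf]; linarith [p.2.2]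
    rw [Function.comp_apply, normComp, if_pos hp, coe_firstHalf, mul_div_cancel₀ _ two_ne_zero,
      toI, projIcc_val]

theorem factorsVia_normComp_secondHalf {γ₁ γ₂ : I → E} (h : γ₁ 1 = γ₂ 0) :
    FactorsVia (normComp γ₁ γ₂) secondHalf γ₂ univ := by
  refine ⟨fun p q hpq => ?_, ?_, fun p _ => ?_⟩
  · change (1 + (p : ℝ)) / 2 ≤ (1 + (q : ℝ)) / 2
    linarith [Subtype.coe_le_coe.mpr hpq]
  · exact ((continuous_const.add continuous_subtype_val).div_const 2).subtype_mk _
  · rw [Function.comp_apply, normComp]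
    split_ifs with hp <;> rw [coe_secondHalf] at *
    · have hp0 : (p : ℝ) = 0 := le_antisymm (by linarith) p.2.1
      rw [hp0, show 2 * ((1 + 0) / 2 : ℝ) = 1 by norm_num, toI_one, h]
      exact congrArg γ₂ (Subtype.ext hp0.symm)
    · rw [show 2 * ((1 + (p : ℝ)) / 2) - 1 = p by ring, toI, projIcc_val]

end NormComp

section UnitInterval

theorem dense_setOf_pos : Dense {s : I | 0 < (s : ℝ)} := by
  have h : closure (Ioi (0 : I)) = univ := by
    rw [closure_Ioi' ⟨1, zero_lt_one⟩]
    exact eq_univ_of_forall fun s => nonneg'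
  exact dense_iff_closure_eq.mpr h

theorem Continuous.eq_of_eqOn_pos {E : Type*} [TopologicalSpace E] [T2Space E] {h₁ h₂ : I → E}
    (hc₁ : Continuous h₁) (hc₂ : Continuous h₂) (h : ∀ s : I, 0 < (s : ℝ) → h₁ s = h₂ s) :
    h₁ = h₂ :=
  Continuous.ext_on dense_setOf_pos hc₁ hc₂ h

theorem strictMono_of_injOn_interior {E : Type*} [PartialOrder E] {θ : I → E} (hθ : Monotone θ)
    (hinj : InjOn θ {t | 0 < (t : ℝ) ∧ (t : ℝ) < 1}) : StrictMono θ := by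
  intro a b hab
  obtain ⟨c, hac, hcb⟩ := exists_between hab
  obtain ⟨d, hcd, hdb⟩ := exists_between hcb
  have hc : 0 < (c : ℝ) ∧ (c : ℝ) < 1 :=
    ⟨a.2.1.trans_lt hac, (Subtype.coe_lt_coe.mpr (hcd.trans hdb)).trans_le b.2.2⟩
  have hd : 0 < (d : ℝ) ∧ (d : ℝ) < 1 :=
    ⟨a.2.1.trans_lt (hac.trans hcd), (Subtype.coe_lt_coe.mpr hdb).trans_le b.2.2⟩
  calc θ a ≤ θ c := hθ hac.le
    _ < θ d := (hθ hcd.le).lt_of_ne fun h => hcd.ne (hinj hc hd h)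
    _ ≤ θ b := hθ hdb.le

theorem StrictMono.exists_section {θ : I → ℝ} (hθ : StrictMono θ) (hc : Continuous θ) :
    ∃ ι : Icc (θ 0) (θ 1) → I, Monotone ι ∧ Continuous ι ∧ ∀ v, θ (ι v) = v := by
  let θ' : I → Icc (θ 0) (θ 1) := fun t => ⟨θ t, hθ.monotone nonneg', hθ.monotone le_one'⟩
  have hsurj : Function.Surjective θ' := fun v => by
    obtain ⟨t, ht⟩ := intermediate_value_univ 0 1 hc v.2
    exact ⟨t, Subtype.ext ht⟩
  let e := StrictMono.orderIsoOfSurjective θ' (fun _ _ h => hθ h) hsurj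
  exact ⟨e.symm, e.symm.monotone, e.symm.continuous,
    fun v => congrArg Subtype.val (e.apply_symm_apply v)⟩

end UnitInterval

section Pieces

variable {E : Type*} [TopologicalSpace E] [T2Space E]

theorem mooreCompN_junction {m : ℕ} {L : Fin (m + 1) → I → E} (hL : ∀ i, Continuous (L i))
    {φ : I → ℝ} (hφm : Monotone φ) (hφc : Continuous φ) (hφ0 : φ 0 = 0) (hφ1 : φ 1 = m + 1)
    (hγ : Continuous fun t => mooreCompN m (fun _ => 1) (fun i s => L i (toI s)) (φ t))
    (i : Fin m) : L i.castSucc 1 = L i.succ 0 := by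
  have hmem : ∀ t, φ t ∈ Icc (0 : ℝ) (m + 1) := fun t =>
    ⟨by rw [← hφ0]; exact hφm nonneg', by rw [← hφ1]; exact hφm le_one'⟩
  -- `φ` is a quotient map onto `[0, m + 1]`, so the Moore composition is continuous there.
  let φ' : I → Icc (0 : ℝ) (m + 1) := fun t => ⟨φ t, hmem t⟩
  have hq : Topology.IsQuotientMap φ' := by
    refine .of_surjective_continuous (fun v => ?_) (hφc.subtype_mk _)
    obtain ⟨t, ht⟩ := intermediate_value_univ 0 1 hφc (by rw [hφ0, hφ1]; exact v.2)
    exact ⟨t, Subtype.ext ht⟩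
  have hN : Continuous fun v : Icc (0 : ℝ) (m + 1) =>
      mooreCompN m (fun _ => 1) (fun i s => L i (toI s)) v :=
    hq.continuous_iff.mpr hγ
  have hi : (i : ℝ) + 1 ≤ m := by exact_mod_cast i.2
  have hcast : ((i.succ : Fin (m + 1)) : ℝ) = i + 1 := by simp [Fin.val_succ]
  let after : I → Icc (0 : ℝ) (m + 1) :=
    fun s => ⟨i.succ + s, by rw [hcast]; linarith [s.2.1], by rw [hcast]; linarith [s.2.2]⟩
  have hafter : Continuous after := (continuous_const.add continuous_subtype_val).subtype_mk _
  have key := congrFun ((hN.comp hafter).eq_of_eqOn_pos (hL i.succ)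
    fun s hs => mooreCompN_one_eq_of_add L i.succ hs) 0
  change mooreCompN m _ _ (i.succ + 0) = _ at key
  rw [← key, add_zero, hcast, mooreCompN_one_eq_of_mem_Ioc _ i.castSucc (by simp),
    Fin.val_castSucc, add_sub_cancel_left, toI_one]

theorem exists_factorsVia_of_eq_mooreCompN {k : ℕ} {Λ : I → E} (hΛ : Continuous Λ)
    {L : Fin (k + 1) → I → E} {θ : I → ℝ} (hθ : StrictMono θ) (hθc : Continuous θ)
    (hθ0 : θ 0 = 0) (hθ1 : θ 1 = k + 1)
    (hΛθ : ∀ t, Λ t = mooreCompN k (fun _ => 1) (fun i s => L i (toI s)) (θ t))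
    (j : Fin (k + 1)) (hL : Continuous (L j)) :
    ∃ ω : I → I, FactorsVia Λ ω (L j) univ ∧ 0 < (ω 1 : ℝ) ∧ (ω 0 : ℝ) < 1 := by
  obtain ⟨ι, hιm, hιc, hθι⟩ := hθ.exists_section hθc
  have hj : (j : ℝ) + 1 ≤ k + 1 := by exact_mod_cast j.2
  have hj0 : (0 : ℝ) ≤ j := j.val.cast_nonneg
  let ω : I → I := fun s => ι ⟨j + s, by rw [hθ0]; linarith [s.2.1], by rw [hθ1]; linarith [s.2.2]⟩
  have hωc : Continuous ω := hιc.comp ((continuous_const.add continuous_subtype_val).subtype_mk _)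
  have hθω : ∀ s, θ (ω s) = j + s := fun s => hθι _
  refine ⟨ω, ⟨fun s s' h => hιm (Subtype.mk_le_mk.mpr ?_), hωc, ?_⟩, ?_, ?_⟩
  · linarith [Subtype.coe_le_coe.mpr h]
  · have := (hΛ.comp hωc).eq_of_eqOn_pos hL fun s hs => by
      rw [Function.comp_apply, hΛθ, hθω, mooreCompN_one_eq_of_add L j hs]
    exact fun s _ => congrFun this s
  · by_contra h
    have := hθ.monotone (Subtype.coe_le_coe.mp (not_lt.mp h) : ω 1 ≤ 0)
    rw [hθω, hθ0, Set.Icc.coe_one] at this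
    linarith
  · by_contra h
    have := hθ.monotone (Subtype.coe_le_coe.mp (not_lt.mp h) : 1 ≤ ω 0)
    rw [hθω, hθ1, Set.Icc.coe_zero] at this
    linarith

end Pieces

namespace CellularMDSpace

variable (X : CellularMDSpace α)

theorem exists_mem_openCell {x : α} (hx : x ∉ X.states) : ∃ i, x ∈ (X.cell i).openCell := by
  have hcover : x ∈ X.states ∪ ⋃ i, (X.cell i).openCell := X.cell_cover ▸ mem_univ x
  simpa [hx] using hcover

theorem not_mem_openCell_of_mem_states {x : α} (hx : x ∈ X.states) (i : X.ι) :
    x ∉ (X.cell i).openCell :=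
  fun h => disjoint_left.mp (X.cell_states_disjoint i) h hx

theorem cell_g_eq_cases {d d' : X.ι} {w : EuclideanSpace ℝ (Fin (X.cell d).n)}
    {w' : EuclideanSpace ℝ (Fin (X.cell d').n)} (hw : ‖w‖ < 1) (hw' : ‖w'‖ < 1) {a b : I}
    (ha : 0 < (a : ℝ)) (hb : (b : ℝ) < 1) (h : (X.cell d).g w a = (X.cell d').g w' b) :
    ((X.cell d).g w = (X.cell d').g w' ∧ a = b) ∨ (a = 1 ∧ b = 0) := by
  rcases a.2.2.lt_or_eq with ha1 | ha1
  · have hmem : (X.cell d).g w a ∈ (X.cell d).openCell := ⟨w, a, hw, ha, ha1, rfl⟩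
    have hb0 : 0 < (b : ℝ) := by
      refine b.2.1.lt_of_ne fun hb0 => X.not_mem_openCell_of_mem_states ?_ d hmem
      rw [h, show b = 0 from Subtype.ext hb0.symm, (X.cell d').g_src w' hw'.le]
      exact (X.cell d').src_mem
    obtain rfl : d = d' := by
      by_contra hne
      exact disjoint_left.mp (X.cell_disjoint hne) hmem ⟨w', b, hw', hb0, hb, h.symm⟩
    obtain ⟨rfl, rfl⟩ := (X.cell d).g_inj w w' a b hw hw' ha ha1 hb0 hb h
    exact Or.inl ⟨rfl, rfl⟩
  · obtain rfl : a = 1 := Subtype.ext ha1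
    have hstate : (X.cell d).g w 1 ∈ X.states := by
      rw [(X.cell d).g_tgt w hw.le]
      exact (X.cell d).tgt_mem
    refine Or.inr ⟨rfl, Subtype.ext (b.2.1.eq_or_lt.resolve_right fun hb0 => ?_).symm⟩
    exact X.not_mem_openCell_of_mem_states hstate d' ⟨w', b, hw', hb0, hb, h.symm⟩

end CellularMDSpace

structure CellFactorization (X : CellularMDSpace α) (δ : I → α) where
  d : X.ι
  w : EuclideanSpace ℝ (Fin (X.cell d).n)
  norm_w_lt_one : ‖w‖ < 1
  ω : I → I
  factorsVia : FactorsVia ((X.cell d).g w) ω δ univ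
  zero_lt_ω_one : 0 < (ω 1 : ℝ)
  ω_zero_lt_one : (ω 0 : ℝ) < 1

theorem exists_cellFactorization {X : CellularMDSpace α} {Y : CellularMDSpace β} {f : α → β}
    {g : β → α} (hf : IsMDMap X.toMultipointedDSpace Y.toMultipointedDSpace f)
    (hgl : Function.LeftInverse g f) (hgr : Function.RightInverse g f) (c : Y.ι)
    {z : EuclideanSpace ℝ (Fin (Y.cell c).n)} (hz : ‖z‖ < 1) :
    Nonempty (CellFactorization X (g ∘ (Y.cell c).g z)) := by
  have := Y.t2
  let half : I := ⟨1 / 2, by norm_num, by norm_num⟩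
  have hhalf : 0 < (half : ℝ) ∧ (half : ℝ) < 1 := by norm_num [half]
  set y := (Y.cell c).g z half
  have hy : y ∉ Y.states := fun hs =>
    Y.not_mem_openCell_of_mem_states hs c ⟨z, half, hz, hhalf.1, hhalf.2, rfl⟩
  obtain ⟨d, w, t₀, hw, ht₀0, ht₀1, hgy⟩ :=
    X.exists_mem_openCell (x := g y) fun hs => hy (hgr y ▸ hf.2.1 hs)
  have hfΛ := hf.2.2 _ ((X.cell d).exec_mem w hw.le)
  obtain ⟨k, c', z', θ, hz', hθm, hθc, hθ0, hθ1, hθ⟩ := Y.exec_decomp _ hfΛ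
  have hθs : StrictMono θ := strictMono_of_injOn_interior hθm fun a ha b hb hab =>
    ((X.cell d).g_inj w w a b hw hw ha.1 ha.2 hb.1 hb.2
      (hgl.injective ((hθ a).trans (by rw [hab]; exact (hθ b).symm)))).2
  obtain ⟨j, hj⟩ := exists_fin_mem_Ioc (k := k) (u := θ t₀)
    ⟨hθ0 ▸ hθs (show ((0 : I) : ℝ) < t₀ from ht₀0),
      hθ1 ▸ hθs (show (t₀ : ℝ) < ((1 : I) : ℝ) from ht₀1)⟩
  have hpiece : (Y.cell (c' j)).g (z' j) (toI (θ t₀ - j)) = y := by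
    rw [← hgr y, ← hgy]
    exact (mooreCompN_one_eq_of_mem_Ioc (fun i s => (Y.cell (c' i)).g (z' i) (toI s)) j
      hj).symm.trans (hθ t₀).symm
  have hpos : 0 < (toI (θ t₀ - j) : ℝ) := by
    rw [coe_toI_of_mem ⟨by linarith [hj.1], by linarith [hj.2]⟩]
    linarith [hj.1]
  obtain ⟨hL, -⟩ : (Y.cell (c' j)).g (z' j) = (Y.cell c).g z ∧ _ :=
    (Y.cell_g_eq_cases (hz' j) hz hpos hhalf.2 hpiece).resolve_right fun h =>
      by simpa [half] using congrArg Subtype.val h.2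
  obtain ⟨ω, hω, hω1, hω0⟩ := exists_factorsVia_of_eq_mooreCompN (Y.exec_cont _ hfΛ) hθs hθc
    hθ0 hθ1 hθ j (Y.exec_cont _ ((Y.cell (c' j)).exec_mem _ (hz' j).le))
  rw [hL] at hω
  refine ⟨d, w, hw, ω, ⟨hω.1, hω.2.1, fun s _ => ?_⟩, hω1, hω0⟩
  rw [Function.comp_apply, Function.comp_apply, ← hω.2.2 (mem_univ s)]
  exact (hgl _).symm

/-- `γ` begins with the longitudinal path `η` (embedded by `ρ`), and time `0` of `δ` is time `a`
of `η`: this is what allows a further piece to be prepended, either running along `η` or glued in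
front of `γ` by a normalized composition. -/
def HasHeadedTrace (X : CellularMDSpace α) (η : I → α) (a : I) (δ : ℝ → α) (K : ℝ) : Prop :=
  ∃ γ ∈ X.exec, ∃ (Ψ : ℝ → I) (ρ : I → I),
    FactorsVia γ Ψ δ (Iic K) ∧ FactorsVia γ ρ η univ ∧ ρ 0 = 0 ∧ Ψ 0 = ρ a

namespace CellFactorization

variable {X : CellularMDSpace α} {δ₀ δ₁ : I → α} (F : CellFactorization X δ₀)

theorem factorsVia_toI : FactorsVia ((X.cell F.d).g F.w) (F.ω ∘ toI) (δ₀ ∘ toI) (Iic 1) :=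
  F.factorsVia.comp_right monotone_toI continuous_toI (mapsTo_univ _ _)

theorem hasHeadedTrace : HasHeadedTrace X ((X.cell F.d).g F.w) (F.ω 0) (δ₀ ∘ toI) 1 :=
  ⟨_, (X.cell F.d).exec_mem _ F.norm_w_lt_one.le, F.ω ∘ toI, id, F.factorsVia_toI,
    ⟨monotone_id, continuous_id, fun _ _ => rfl⟩, rfl, by simp [toI_zero]⟩

theorem hasHeadedTrace_cons_of_eq {η : I → α} {δ : ℝ → α} {K : ℝ}
    (ht : HasHeadedTrace X η (F.ω 1) δ K) (hη : (X.cell F.d).g F.w = η) :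
    HasHeadedTrace X ((X.cell F.d).g F.w) (F.ω 0) (mooreComp 1 (δ₀ ∘ toI) δ) (1 + K) := by
  obtain ⟨γ, hγ, Ψ, ρ, hΨ, hρ, hρ0, hΨ0⟩ := ht
  subst hη
  refine ⟨γ, hγ, mooreComp 1 (ρ ∘ F.ω ∘ toI) Ψ, ρ,
    (hρ.trans F.factorsVia_toI).mooreComp hΨ ?_, hρ, hρ0, ?_⟩
  · simp [toI_one, hΨ0]
  · simp [mooreComp, toI_zero]

theorem hasHeadedTrace_cons_of_endpoints {η : I → α} {δ : ℝ → α} {K : ℝ}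
    (ht : HasHeadedTrace X η 0 δ K) (hF : F.ω 1 = 1) (hη : (X.cell F.d).g F.w 1 = η 0) :
    HasHeadedTrace X ((X.cell F.d).g F.w) (F.ω 0) (mooreComp 1 (δ₀ ∘ toI) δ) (1 + K) := by
  obtain ⟨γ, hγ, Ψ, ρ, hΨ, hρ, hρ0, hΨ0⟩ := ht
  have hjoin : (X.cell F.d).g F.w 1 = γ 0 := by
    have h0 := hρ.2.2 (mem_univ 0)
    rw [Function.comp_apply, hρ0] at h0
    rw [hη, h0]
  refine ⟨_, X.exec_norm _ ((X.cell F.d).exec_mem _ F.norm_w_lt_one.le) _ hγ hjoin,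
    mooreComp 1 (firstHalf ∘ F.ω ∘ toI) (secondHalf ∘ Ψ), firstHalf,
    ((factorsVia_normComp_firstHalf _ _).trans F.factorsVia_toI).mooreComp
      ((factorsVia_normComp_secondHalf hjoin).trans hΨ) ?_,
    factorsVia_normComp_firstHalf _ _, ?_, ?_⟩
  · apply Subtype.ext
    simp [toI_one, hF, hΨ0, hρ0, coe_firstHalf, coe_secondHalf]
  · exact Subtype.ext (by simp [coe_firstHalf])
  · simp [mooreComp, toI_zero]

theorem hasHeadedTrace_cons (F₁ : CellFactorization X δ₁) {δ : ℝ → α} {K : ℝ}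
    (ht : HasHeadedTrace X ((X.cell F₁.d).g F₁.w) (F₁.ω 0) δ K) (h : δ₀ 1 = δ₁ 0) :
    HasHeadedTrace X ((X.cell F.d).g F.w) (F.ω 0) (mooreComp 1 (δ₀ ∘ toI) δ) (1 + K) := by
  have hmeet : (X.cell F.d).g F.w (F.ω 1) = (X.cell F₁.d).g F₁.w (F₁.ω 0) :=
    (F.factorsVia.2.2 (mem_univ 1)).trans (h.trans (F₁.factorsVia.2.2 (mem_univ 0)).symm)
  rcases X.cell_g_eq_cases F.norm_w_lt_one F₁.norm_w_lt_one F.zero_lt_ω_one F₁.ω_zero_lt_one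
    hmeet with ⟨hη, ha⟩ | ⟨h1, h0⟩
  · exact F.hasHeadedTrace_cons_of_eq (ha ▸ ht) hη
  · rw [h0] at ht hmeet
    exact F.hasHeadedTrace_cons_of_endpoints ht h1 (h1 ▸ hmeet)

end CellFactorization

theorem hasHeadedTrace_mooreCompN {X : CellularMDSpace α} :
    ∀ {m : ℕ} {δ : Fin (m + 1) → I → α} (F : ∀ i, CellFactorization X (δ i)),
      (∀ i : Fin m, δ i.castSucc 1 = δ i.succ 0) →
      HasHeadedTrace X ((X.cell (F 0).d).g (F 0).w) ((F 0).ω 0)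
        (mooreCompN m (fun _ => 1) (fun i s => δ i (toI s))) (m + 1)
  | 0, _, F, _ => by
    rw [show ((0 : ℕ) : ℝ) + 1 = 1 by norm_num]
    exact (F 0).hasHeadedTrace
  | m + 1, δ, F, hjun => by
    have ht := hasHeadedTrace_mooreCompN (fun i => F i.succ) fun i => by
      rw [Fin.succ_castSucc]
      exact hjun i.succ
    have h0 := hjun 0
    rw [Fin.castSucc_zero] at h0
    rw [show ((m + 1 : ℕ) : ℝ) + 1 = 1 + (m + 1) by push_cast; ring]
    exact (F 0).hasHeadedTrace_cons (F (0 : Fin (m + 1)).succ) ht h0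

theorem exists_factorsVia_comp_exec {X : CellularMDSpace α} {Y : CellularMDSpace β} {f : α → β}
    {g : β → α} (hf : IsMDMap X.toMultipointedDSpace Y.toMultipointedDSpace f)
    (hgl : Function.LeftInverse g f) (hgr : Function.RightInverse g f) {γ : I → β}
    (hγ : γ ∈ Y.exec) : ∃ γ' ∈ X.exec, ∃ Φ : I → I, FactorsVia γ' Φ (g ∘ γ) univ := by
  have := Y.t2
  obtain ⟨m, c, z, φ, hz, hφm, hφc, hφ0, hφ1, hγφ⟩ := Y.exec_decomp γ hγ
  have hγc := Y.exec_cont γ hγ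
  rw [funext hγφ] at hγc
  have hjun := mooreCompN_junction
    (fun i => Y.exec_cont _ ((Y.cell (c i)).exec_mem _ (hz i).le)) hφm hφc hφ0 hφ1 hγc
  obtain ⟨γ', hγ', Ψ, -, hΨ, -⟩ := hasHeadedTrace_mooreCompN
    (fun i => (exists_cellFactorization hf hgl hgr (c i) (hz i)).some) fun i => congrArg g (hjun i)
  refine ⟨γ', hγ', Ψ ∘ φ, ?_⟩
  convert hΨ.comp_right hφm hφc fun t _ => (hφ1 ▸ hφm le_one' : φ t ≤ m + 1) using 1
  funext t
  rw [Function.comp_apply, hγφ t, apply_mooreCompN g]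
  rfl

theorem comp_mem_dPaths {X : MultipointedDSpace α} {Y : MultipointedDSpace β} {h : α → β}
    (H : ∀ γ ∈ X.exec, ∃ γ' ∈ Y.exec, ∃ Φ : I → I, FactorsVia γ' Φ (h ∘ γ) univ) {Γ : I → α}
    (hΓ : Γ ∈ dPaths X) : h ∘ Γ ∈ dPaths Y := by
  rcases hΓ with ⟨x, hx⟩ | ⟨n, ℓ, γ, φ, hℓ, hsum, hγ, hφ, hΓ⟩
  · exact Or.inl ⟨h x, fun t => congrArg h (hx t)⟩
  · choose γ' hγ' Φ hΦ using fun i => H (γ i) (hγ i)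
    refine Or.inr ⟨n, ℓ, γ', fun i => Φ i ∘ φ i, hℓ, hsum, hγ',
      fun i => ⟨(hΦ i).1.comp (hφ i).1, (hΦ i).2.1.comp (hφ i).2⟩, fun t => ?_⟩
    rw [Function.comp_apply, hΓ t, apply_mooreCompN h]
    congr 1
    funext i s
    exact ((hΦ i).2.2 (mem_univ _)).symm

theorem globular_subdivision_iff_sp_iso (X : CellularMDSpace α) (Y : CellularMDSpace β)
    (f : α → β) (hf : IsMDMap X.toMultipointedDSpace Y.toMultipointedDSpace f) :
    IsHomeomorph f ↔
      ∃ g : β → α, Continuous g ∧ Function.LeftInverse g f ∧ Function.RightInverse g f ∧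
        (∀ Γ ∈ dPaths X.toMultipointedDSpace, f ∘ Γ ∈ dPaths Y.toMultipointedDSpace) ∧
        (∀ Γ ∈ dPaths Y.toMultipointedDSpace, g ∘ Γ ∈ dPaths X.toMultipointedDSpace) := by
  constructor
  · intro hhomeo
    obtain ⟨-, g, hgl, hgr, hgc⟩ := isHomeomorph_iff_exists_inverse.mp hhomeo
    refine ⟨g, hgc, hgl, hgr, fun Γ => comp_mem_dPaths fun γ hγ => ?_,
      fun Γ => comp_mem_dPaths fun γ hγ => exists_factorsVia_comp_exec hf hgl hgr hγ⟩
    exact ⟨f ∘ γ, hf.2.2 γ hγ, id, monotone_id, continuous_id, fun _ _ => rfl⟩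
  · rintro ⟨g, hgc, hgl, hgr, -, -⟩
    exact isHomeomorph_iff_exists_inverse.mpr ⟨hf.1, g, hgl, hgr, hgc⟩

end
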